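/- arXiv:1607.07681 — 5 statements merged into one kernel-verified Lean document; each statement's English description precedes it below -/
import Mathlib

section
/- For every real p > N with N ≥ 1 a natural number, ∫₀¹ |ln t|^{p-1} · t^{N-1}/(1-t²)^N dt = Γ(p)/(N-1)! · Σ_{k=0}^∞ (N+k-1)!/k! · 1/(N+2k)^p. -/
/-!
Substituting `t = e^{-x}` turns `∫₀¹ |log t|^(q-1) t^(a-1) dt` into the Gamma integral
`∫₀^∞ x^(q-1) e^{-a x} dx = Γ(q) / a^q`. Expanding `t^(N-1) / (1 - t²)^N` as the binomial series
`∑ₖ C(k+N-1, N-1) t^(N+2k-1)` and integrating term by term (the terms are nonnegative and their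
integrals `C(k+N-1, N-1) Γ(p) / (N+2k)^p = O(k^(N-1-p))` are summable since `p > N`) gives the
series on the right.
-/

open Real MeasureTheory Set

section ExpNegSubstitution

variable {E : Type*} [NormedAddCommGroup E] [NormedSpace ℝ E]

lemma image_exp_neg_Ioi : (fun x : ℝ => exp (-x)) '' Ioi 0 = Ioo 0 1 := by
  ext t
  constructor
  · rintro ⟨x, hx, rfl⟩
    exact ⟨exp_pos _, exp_lt_one_iff.2 (neg_neg_iff_pos.2 hx)⟩
  · rintro ⟨ht0, ht1⟩
    exact ⟨-log t, neg_pos.2 (log_neg ht0 ht1), by simp [exp_log ht0]⟩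

lemma hasDerivWithinAt_exp_neg (s : Set ℝ) (x : ℝ) :
    HasDerivWithinAt (fun x : ℝ => exp (-x)) (-exp (-x)) s x := by
  simpa using (hasDerivAt_neg x).exp.hasDerivWithinAt

lemma injOn_exp_neg (s : Set ℝ) : InjOn (fun x : ℝ => exp (-x)) s :=
  fun _ _ _ _ h => neg_injective (exp_injective h)

lemma integrableOn_Ioo_zero_one_iff_comp_exp_neg (g : ℝ → E) :
    IntegrableOn g (Ioo 0 1) ↔ IntegrableOn (fun x => exp (-x) • g (exp (-x))) (Ioi 0) := by
  rw [← image_exp_neg_Ioi, integrableOn_image_iff_integrableOn_abs_deriv_smul measurableSet_Ioi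
    (fun x _ => hasDerivWithinAt_exp_neg _ x) (injOn_exp_neg _)]
  simp only [abs_neg, abs_of_pos (exp_pos _)]

lemma integral_Ioo_zero_one_eq_comp_exp_neg (g : ℝ → E) :
    ∫ t in Ioo 0 1, g t = ∫ x in Ioi 0, exp (-x) • g (exp (-x)) := by
  rw [← image_exp_neg_Ioi, integral_image_eq_integral_abs_deriv_smul measurableSet_Ioi
    (fun x _ => hasDerivWithinAt_exp_neg _ x) (injOn_exp_neg _)]
  simp only [abs_neg, abs_of_pos (exp_pos _)]

end ExpNegSubstitution

section LogPowerIntegral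

variable {a q : ℝ}

lemma exp_neg_smul_abs_log_rpow_mul_rpow {x : ℝ} (hx : x ∈ Ioi 0) :
    exp (-x) • (|log (exp (-x))| ^ (q - 1) * exp (-x) ^ (a - 1))
      = x ^ (q - 1) * exp (-(a * x)) := by
  rw [smul_eq_mul, log_exp, abs_neg, abs_of_pos hx, ← exp_mul,
    show -(a * x) = -x + -x * (a - 1) by ring, exp_add]
  ring

lemma integrableOn_abs_log_rpow_mul_rpow (ha : 0 < a) (hq : 0 < q) :
    IntegrableOn (fun t => |log t| ^ (q - 1) * t ^ (a - 1)) (Ioo 0 1) := by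
  rw [integrableOn_Ioo_zero_one_iff_comp_exp_neg]
  refine IntegrableOn.congr_fun ?_ (fun x hx => (exp_neg_smul_abs_log_rpow_mul_rpow hx).symm)
    measurableSet_Ioi
  simpa [neg_mul] using
    integrableOn_rpow_mul_exp_neg_mul_rpow (by linarith) zero_lt_one ha

lemma integral_abs_log_rpow_mul_rpow (ha : 0 < a) (hq : 0 < q) :
    ∫ t in Ioo 0 1, |log t| ^ (q - 1) * t ^ (a - 1) = Gamma q / a ^ q := by
  rw [integral_Ioo_zero_one_eq_comp_exp_neg,
    setIntegral_congr_fun measurableSet_Ioi (fun x hx => exp_neg_smul_abs_log_rpow_mul_rpow hx),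
    integral_rpow_mul_exp_neg_mul_Ioi hq ha, div_rpow zero_le_one ha.le, one_rpow,
    one_div_mul_eq_div]

end LogPowerIntegral

lemma hasSum_choose_mul_pow_two_mul {𝕜 : Type*} [NormedDivisionRing 𝕜] (n : ℕ) {t : 𝕜}
    (ht : ‖t‖ < 1) :
    HasSum (fun k => ((k + n).choose n : 𝕜) * t ^ (n + 2 * k)) (t ^ n / (1 - t ^ 2) ^ (n + 1)) := by
  have ht2 : ‖t ^ 2‖ < 1 := by
    rw [norm_pow]
    exact pow_lt_one₀ (norm_nonneg t) ht two_ne_zero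
  have hterm (k : ℕ) : ((k + n).choose n : 𝕜) * t ^ (n + 2 * k)
      = t ^ n * (((k + n).choose n : 𝕜) * (t ^ 2) ^ k) := by
    rw [pow_add, pow_mul, ← mul_assoc, ← mul_assoc, (Nat.cast_commute _ _).eq]
  simpa only [hterm, mul_one_div] using
    (hasSum_choose_mul_geometric_of_norm_lt_one n ht2).mul_left (t ^ n)

lemma summable_choose_mul_one_div_rpow (n : ℕ) {p : ℝ} (hp : n + 1 < p) :
    Summable (fun k : ℕ => ((k + n).choose n : ℝ) * (1 / ((n : ℝ) + 1 + 2 * k) ^ p)) := by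
  have hdom : Summable (fun k : ℕ => ((k : ℝ) + 1) ^ ((n : ℝ) - p)) := by
    simpa using (summable_nat_add_iff 1).2 (summable_nat_rpow.2 (by linarith))
  refine Summable.of_nonneg_of_le (fun k => by positivity) (fun k => ?_) hdom
  have hpos : (0 : ℝ) < n + 1 + 2 * k := by positivity
  have hchoose : ((k + n).choose n : ℝ) ≤ ((n : ℝ) + 1 + 2 * k) ^ (n : ℝ) := by
    rw [rpow_natCast]
    calc ((k + n).choose n : ℝ) ≤ ((k + n : ℕ) : ℝ) ^ n := by
          exact_mod_cast Nat.choose_le_pow _ _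
      _ ≤ ((n : ℝ) + 1 + 2 * k) ^ n := by
          gcongr
          push_cast
          linarith [(k.cast_nonneg : (0 : ℝ) ≤ k)]
  calc ((k + n).choose n : ℝ) * (1 / ((n : ℝ) + 1 + 2 * k) ^ p)
      ≤ ((n : ℝ) + 1 + 2 * k) ^ (n : ℝ) * (1 / ((n : ℝ) + 1 + 2 * k) ^ p) := by gcongr
    _ = ((n : ℝ) + 1 + 2 * k) ^ ((n : ℝ) - p) := by rw [mul_one_div, ← rpow_sub hpos]
    _ ≤ ((k : ℝ) + 1) ^ ((n : ℝ) - p) :=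
        rpow_le_rpow_of_nonpos (by positivity) (by linarith [(n.cast_nonneg : (0 : ℝ) ≤ n)])
          (by linarith)

lemma hasSum_integral_abs_log_rpow_mul_pow_div (n : ℕ) {p : ℝ} (hp : n + 1 < p) :
    HasSum (fun k : ℕ => ((k + n).choose n : ℝ) * (Gamma p / ((n : ℝ) + 1 + 2 * k) ^ p))
      (∫ t in Ioo 0 1, |log t| ^ (p - 1) * t ^ n / (1 - t ^ 2) ^ (n + 1)) := by
  have hp0 : 0 < p := by linarith [(n.cast_nonneg : (0 : ℝ) ≤ n)]
  have hpos (k : ℕ) : (0 : ℝ) < n + 1 + 2 * k := by positivity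
  have hexp (k : ℕ) (t : ℝ) : t ^ ((n : ℝ) + 1 + 2 * k - 1) = t ^ (n + 2 * k) := by
    rw [← rpow_natCast]
    push_cast
    ring_nf
  set F : ℕ → ℝ → ℝ := fun k t => ((k + n).choose n : ℝ) * (|log t| ^ (p - 1) * t ^ (n + 2 * k))
  have hint (k : ℕ) : IntegrableOn (F k) (Ioo 0 1) := by
    have h := (integrableOn_abs_log_rpow_mul_rpow (hpos k) hp0).const_mul ((k + n).choose n : ℝ)
    simp only [hexp] at h
    exact h
  have hval (k : ℕ) :
      ∫ t in Ioo 0 1, F k t = ((k + n).choose n : ℝ) * (Gamma p / ((n : ℝ) + 1 + 2 * k) ^ p) := by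
    rw [integral_const_mul, ← integral_abs_log_rpow_mul_rpow (hpos k) hp0]
    simp only [hexp]
  have hnorm (k : ℕ) : ∫ t in Ioo 0 1, ‖F k t‖ = ∫ t in Ioo 0 1, F k t :=
    setIntegral_congr_fun measurableSet_Ioo fun t ht =>
      norm_of_nonneg (have := ht.1; by positivity)
  have hsum : Summable fun k => ∫ t in Ioo 0 1, ‖F k t‖ := by
    simp only [hnorm, hval, div_eq_mul_one_div (Gamma p), mul_left_comm _ (Gamma p)]
    exact (summable_choose_mul_one_div_rpow n hp).mul_left _
  have hseries : ∀ t ∈ Ioo (0 : ℝ) 1,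
      ∑' k, F k t = |log t| ^ (p - 1) * t ^ n / (1 - t ^ 2) ^ (n + 1) := by
    intro t ⟨ht0, ht1⟩
    have ht : ‖t‖ < 1 := by rwa [norm_of_nonneg ht0.le]
    simp only [F, mul_left_comm _ (|log t| ^ (p - 1)), tsum_mul_left,
      (hasSum_choose_mul_pow_two_mul n ht).tsum_eq, mul_div_assoc]
  simpa only [hval, setIntegral_congr_fun measurableSet_Ioo hseries] using
    hasSum_integral_of_summable_integral_norm hint hsum

/-- For `N ≥ 1` and real `p > N`,
`∫₀¹ |ln t|^(p-1) t^(N-1)/(1-t²)^N dt = Γ(p)/(N-1)! · Σ_k (N+k-1)!/k! · (N+2k)^(-p)`. -/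
theorem stmt4 (N : ℕ) (hN : 1 ≤ N) (p : ℝ) (hp : (N : ℝ) < p) :
    ∫ t in Set.Ioo (0 : ℝ) 1, |Real.log t| ^ (p - 1) * t ^ (N - 1) / (1 - t ^ 2) ^ N
    = Real.Gamma p / ((N - 1).factorial : ℝ)
      * ∑' k : ℕ, ((N + k - 1).factorial : ℝ) / (k.factorial : ℝ)
        * (1 / ((N : ℝ) + 2 * k) ^ p) := by
  obtain ⟨n, rfl⟩ : ∃ n, N = n + 1 := ⟨N - 1, by omega⟩
  have hsub (k : ℕ) : n + 1 + k - 1 = k + n := by omega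
  push_cast at hp ⊢
  rw [← (hasSum_integral_abs_log_rpow_mul_pow_div n hp).tsum_eq,
    ← tsum_mul_left]
  congr with k
  rw [hsub, ← Nat.add_choose_mul_factorial_mul_factorial k n]
  push_cast
  field_simp
end

section
/- Let N ≥ 2. Then lim_{p→N⁺} (p - N) · Σ_{k=0}^∞ (N+k-1)!/k! · 1/(N+2k)^p = 1/2^N. -/
open Filter Topology Real

/-!
The coefficient `(N + k - 1)! / k! = (k + 1)⋯(k + N - 1)` is a product of `N - 1` factors
centred at `x = k + N / 2`, and `N + 2k = 2x`. Since `(k + 1)^(N-1)` and `(k + N - 1)^(N-1)`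
bound both the product and `x^(N-1)`, the `k`-th term equals `2^(-p) (x^(-(p-N+1)) + r_k(p))`
with `|r_k(p)| ≤ C x^(-2)` uniformly for `p ≥ N`. The remainders form a bounded series, killed
by the factor `p - N`. The main part is a shifted zeta series: `(s - 1) ∑ (k + a)^(-s) → 1` as
`s → 1⁺` for every shift `a ≥ 1`, by squeezing between integer shifts, which differ from `ζ(s)`
by finitely many terms. This leaves the factor `2^(-N)`.
-/

lemma summable_nat_add_rpow_neg {a p : ℝ} (ha : 0 ≤ a) (hp : 1 < p) :
    Summable fun k : ℕ => ((k : ℝ) + a) ^ (-p) := by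
  refine ((summable_one_div_nat_add_rpow a p).2 hp).congr fun k => ?_
  rw [abs_of_nonneg (by positivity), rpow_neg (by positivity), one_div]

lemma tsum_add_rpow_neg_le {b c p : ℝ} (hb : 0 < b) (hbc : b ≤ c) (hp : 1 < p) :
    ∑' k : ℕ, ((k : ℝ) + c) ^ (-p) ≤ ∑' k : ℕ, ((k : ℝ) + b) ^ (-p) :=
  Summable.tsum_le_tsum
    (fun k => rpow_le_rpow_of_nonpos (by positivity) (by linarith) (by linarith))
    (summable_nat_add_rpow_neg (hb.le.trans hbc) hp) (summable_nat_add_rpow_neg hb.le hp)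

lemma tendsto_sub_mul_tsum_nat_add_rpow_neg (m : ℕ) :
    Tendsto (fun p : ℝ => (p - 1) * ∑' k : ℕ, ((k : ℝ) + m) ^ (-p)) (𝓝[>] 1)
      (𝓝 1) := by
  have hzeta :
      Tendsto (fun p : ℝ => (p - 1) * ∑' n : ℕ, (n : ℝ) ^ (-p)) (𝓝[>] 1) (𝓝 1) :=
    tendsto_sub_mul_tsum_nat_rpow.congr fun p => by
      simp_rw [rpow_neg (Nat.cast_nonneg _), one_div]
  have hhead : Tendsto (fun p : ℝ => (p - 1) * ∑ n ∈ Finset.range m, (n : ℝ) ^ (-p))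
      (𝓝[>] 1) (𝓝 0) := by
    have hlin : Tendsto (fun p : ℝ => p - 1) (𝓝[>] 1) (𝓝 0) :=
      tendsto_sub_nhds_zero_iff.2 nhdsWithin_le_nhds
    have hsum : Tendsto (fun p : ℝ => ∑ n ∈ Finset.range m, (n : ℝ) ^ (-p)) (𝓝[>] 1)
        (𝓝 (∑ n ∈ Finset.range m, (n : ℝ) ^ (-1 : ℝ))) :=
      tendsto_finsetSum _ fun n _ =>
        ((continuousAt_const_rpow' (a := (n : ℝ)) (neg_ne_zero.2 one_ne_zero)).comp
          continuousAt_neg).tendsto.mono_left nhdsWithin_le_nhds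
    simpa using hlin.mul hsum
  refine (by simpa using hzeta.sub hhead :
    Tendsto (fun p : ℝ => (p - 1) * ∑' n : ℕ, (n : ℝ) ^ (-p)
      - (p - 1) * ∑ n ∈ Finset.range m, (n : ℝ) ^ (-p)) (𝓝[>] 1) (𝓝 1)).congr' ?_
  filter_upwards [self_mem_nhdsWithin] with p (hp : 1 < p)
  have hs : Summable fun n : ℕ => (n : ℝ) ^ (-p) := summable_nat_rpow.2 (by linarith)
  rw [← hs.sum_add_tsum_nat_add m]
  push_cast
  ring

lemma tendsto_sub_mul_tsum_add_rpow_neg {a : ℝ} (ha : 1 ≤ a) :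
    Tendsto (fun p : ℝ => (p - 1) * ∑' k : ℕ, ((k : ℝ) + a) ^ (-p)) (𝓝[>] 1)
      (𝓝 1) := by
  refine tendsto_of_tendsto_of_tendsto_of_le_of_le'
    (tendsto_sub_mul_tsum_nat_add_rpow_neg ⌈a⌉₊)
    (by simpa using tendsto_sub_mul_tsum_nat_add_rpow_neg 1) ?_ ?_ <;>
  filter_upwards [self_mem_nhdsWithin] with p (hp : 1 < p) <;>
  refine mul_le_mul_of_nonneg_left ?_ (by linarith)
  · exact tsum_add_rpow_neg_le (by linarith) (Nat.le_ceil a) hp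
  · exact tsum_add_rpow_neg_le one_pos (by simpa using ha) hp

lemma tendsto_sub_const_nhdsGT (a c : ℝ) :
    Tendsto (fun p => p - c) (𝓝[>] a) (𝓝[>] (a - c)) :=
  (continuous_sub_right c).continuousWithinAt.tendsto_nhdsWithin fun p (hp : a < p) =>
    show a - c < p - c by linarith

lemma tendsto_sub_mul_tsum_of_abs_le {a : ℝ} {e : ℝ → ℕ → ℝ} {b : ℕ → ℝ}
    (hb : Summable b) (he : ∀ᶠ p in 𝓝[>] a, ∀ k, |e p k| ≤ b k) :
    Tendsto (fun p => (p - a) * ∑' k, e p k) (𝓝[>] a) (𝓝 0) := by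
  have hlin : Tendsto (fun p : ℝ => p - a) (𝓝[>] a) (𝓝 0) :=
    tendsto_sub_nhds_zero_iff.2 nhdsWithin_le_nhds
  refine hlin.zero_mul_isBoundedUnder_le ⟨∑' k, b k, eventually_map.2 ?_⟩
  filter_upwards [he] with p hp using tsum_of_norm_bounded hb.hasSum hp

lemma factorial_add_div_factorial (k n : ℕ) :
    ((k + n).factorial : ℝ) / k.factorial = (k + 1).ascFactorial n := by
  rw [← Nat.factorial_mul_ascFactorial]
  push_cast
  field_simp

lemma abs_ascFactorial_sub_pow_le (k n : ℕ) {x : ℝ} (h1 : (k : ℝ) + 1 ≤ x)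
    (h2 : x ≤ k + n) :
    |((k + 1).ascFactorial n : ℝ) - x ^ n| ≤ (n - 1) * n * ((k : ℝ) + n) ^ (n - 1) := by
  have hlo : ((k : ℝ) + 1) ^ n ≤ (k + 1).ascFactorial n := by
    exact_mod_cast Nat.pow_succ_le_ascFactorial (k + 1) n
  have hhi : ((k + 1).ascFactorial n : ℝ) ≤ ((k : ℝ) + n) ^ n := by
    exact_mod_cast Nat.ascFactorial_le_pow_add k n
  have hxlo : ((k : ℝ) + 1) ^ n ≤ x ^ n := pow_le_pow_left₀ (by positivity) h1 n
  have hxhi : x ^ n ≤ ((k : ℝ) + n) ^ n := pow_le_pow_left₀ (by linarith [h1]) h2 n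
  calc |((k + 1).ascFactorial n : ℝ) - x ^ n| ≤ ((k : ℝ) + n) ^ n - ((k : ℝ) + 1) ^ n :=
        abs_sub_le_iff.2 ⟨by linarith, by linarith⟩
    _ ≤ |((k : ℝ) + n) ^ n - ((k : ℝ) + 1) ^ n| := le_abs_self _
    _ ≤ |((k : ℝ) + n) - (k + 1)| * n * max |(k : ℝ) + n| |(k : ℝ) + 1| ^ (n - 1) :=
        abs_pow_sub_pow_le _ _ _
    _ = (n - 1) * n * ((k : ℝ) + n) ^ (n - 1) := by
        rw [abs_of_nonneg (by linarith), abs_of_nonneg (by positivity),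
          abs_of_nonneg (by positivity), max_eq_left (by linarith)]
        ring

lemma abs_ascFactorial_sub_pow_mul_rpow_neg_le (k n : ℕ) {x p : ℝ} (h1 : (k : ℝ) + 1 ≤ x)
    (h2 : x ≤ k + n) (h3 : (k : ℝ) + n ≤ 2 * x) (hp : n + 1 ≤ p) :
    |(((k + 1).ascFactorial n : ℝ) - x ^ n) * x ^ (-p)|
      ≤ (n - 1) * n * 2 ^ (n - 1) * x ^ (-2 : ℝ) := by
  have hx : 1 ≤ x := by linarith [(Nat.cast_nonneg k : (0 : ℝ) ≤ k)]
  have hn : (1 : ℝ) ≤ n := by linarith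
  calc |(((k + 1).ascFactorial n : ℝ) - x ^ n) * x ^ (-p)|
      = |((k + 1).ascFactorial n : ℝ) - x ^ n| * x ^ (-p) := by
        rw [abs_mul, abs_of_nonneg (rpow_nonneg (by linarith) _)]
    _ ≤ (n - 1) * n * (2 * x) ^ (n - 1) * x ^ (-p) := by
        gcongr
        exact (abs_ascFactorial_sub_pow_le k n h1 h2).trans (by gcongr)
    _ = (n - 1) * n * 2 ^ (n - 1) * x ^ ((n - 1 : ℕ) + -p) := by
        rw [rpow_add (by positivity), rpow_natCast, mul_pow]
        ring
    _ ≤ (n - 1) * n * 2 ^ (n - 1) * x ^ (-2 : ℝ) := by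
        gcongr
        rw [Nat.cast_sub (by exact_mod_cast hn)]
        push_cast
        linarith

/-- The remainder `r_k(p)` for `N = n + 1`, where `x = k + (n + 1) / 2`. -/
noncomputable def ascFactorialRemainder (n : ℕ) (p : ℝ) (k : ℕ) : ℝ :=
  (((k + 1).ascFactorial n : ℝ) - ((k : ℝ) + (n + 1) / 2) ^ n)
    * ((k : ℝ) + (n + 1) / 2) ^ (-p)

lemma abs_ascFactorialRemainder_le {n : ℕ} (hn : 1 ≤ n) {p : ℝ} (hp : n + 1 ≤ p) (k : ℕ) :
    |ascFactorialRemainder n p k|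
      ≤ (n - 1) * n * 2 ^ (n - 1) * ((k : ℝ) + (n + 1) / 2) ^ (-2 : ℝ) := by
  have hn' : (1 : ℝ) ≤ n := by exact_mod_cast hn
  exact abs_ascFactorial_sub_pow_mul_rpow_neg_le k n (by linarith) (by linarith) (by linarith)
    hp

lemma factorial_div_factorial_mul_one_div_rpow_eq (n k : ℕ) (p : ℝ) :
    ((n + 1 + k - 1).factorial : ℝ) / k.factorial * (1 / (((n + 1 : ℕ) : ℝ) + 2 * k) ^ p)
      = 2 ^ (-p) * (((k : ℝ) + (n + 1) / 2) ^ (-(p - n)) + ascFactorialRemainder n p k) := by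
  have hx : 0 < (k : ℝ) + (n + 1) / 2 := by positivity
  have hpow : ((k : ℝ) + (n + 1) / 2) ^ (-(p - n))
      = ((k : ℝ) + (n + 1) / 2) ^ n * ((k : ℝ) + (n + 1) / 2) ^ (-p) := by
    rw [← rpow_natCast, ← rpow_add hx]
    ring_nf
  rw [show n + 1 + k - 1 = k + n by omega, factorial_add_div_factorial,
    show ((n + 1 : ℕ) : ℝ) + 2 * k = 2 * ((k : ℝ) + (n + 1) / 2) by push_cast; ring, one_div,
    ← rpow_neg (by positivity), mul_rpow (by norm_num) hx.le, hpow, ascFactorialRemainder]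
  ring

lemma sub_mul_tsum_factorial_div_eq {n : ℕ} (hn : 1 ≤ n) {p : ℝ} (hp : n + 1 < p) :
    (p - ((n + 1 : ℕ) : ℝ)) * ∑' k : ℕ, ((n + 1 + k - 1).factorial : ℝ) / k.factorial
        * (1 / (((n + 1 : ℕ) : ℝ) + 2 * k) ^ p)
      = 2 ^ (-p) * ((p - n - 1) * ∑' k : ℕ, ((k : ℝ) + (n + 1) / 2) ^ (-(p - n))
        + (p - ((n + 1 : ℕ) : ℝ)) * ∑' k, ascFactorialRemainder n p k) := by
  have hmain : Summable fun k : ℕ => ((k : ℝ) + (n + 1) / 2) ^ (-(p - n)) :=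
    summable_nat_add_rpow_neg (by positivity) (by linarith)
  have hrem : Summable (ascFactorialRemainder n p) :=
    .of_norm_bounded ((summable_nat_add_rpow_neg (by positivity) (by norm_num)).mul_left _)
      (abs_ascFactorialRemainder_le hn hp.le)
  rw [tsum_congr (factorial_div_factorial_mul_one_div_rpow_eq n · p), tsum_mul_left,
    hmain.tsum_add hrem]
  push_cast
  ring

/-- For `N ≥ 2`, `lim_{p→N⁺} (p-N) Σ_k (N+k-1)!/k! (N+2k)^(-p) = 2^(-N)`. -/
theorem stmt9 (N : ℕ) (hN : 2 ≤ N) :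
    Tendsto (fun p : ℝ => (p - N)
        * ∑' k : ℕ, ((N + k - 1).factorial : ℝ) / (k.factorial : ℝ)
            * (1 / ((N : ℝ) + 2 * k) ^ p))
      (nhdsWithin (N : ℝ) (Set.Ioi (N : ℝ))) (nhds (1 / 2 ^ N)) := by
  obtain ⟨n, rfl⟩ : ∃ n, N = n + 1 := ⟨N - 1, by omega⟩
  have hn : 1 ≤ n := by omega
  have hshift : Tendsto (fun p : ℝ => p - n) (𝓝[>] ((n + 1 : ℕ) : ℝ)) (𝓝[>] 1) := by
    simpa using tendsto_sub_const_nhdsGT ((n + 1 : ℕ) : ℝ) n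
  have htwo : Tendsto (fun p : ℝ => (2 : ℝ) ^ (-p)) (𝓝[>] ((n + 1 : ℕ) : ℝ))
      (𝓝 (1 / 2 ^ (n + 1))) := by
    have h := (continuousAt_const_rpow (two_ne_zero' ℝ)).comp (x := ((n + 1 : ℕ) : ℝ))
      continuousAt_neg
    rw [ContinuousAt, Function.comp_apply, rpow_neg zero_le_two, rpow_natCast, ← one_div] at h
    exact h.mono_left nhdsWithin_le_nhds
  have hzeta : Tendsto
      (fun p : ℝ => (p - n - 1) * ∑' k : ℕ, ((k : ℝ) + (n + 1) / 2) ^ (-(p - n)))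
      (𝓝[>] ((n + 1 : ℕ) : ℝ)) (𝓝 1) :=
    (tendsto_sub_mul_tsum_add_rpow_neg (a := ((n : ℝ) + 1) / 2)
      (by linarith [(by exact_mod_cast hn : (1 : ℝ) ≤ n)])).comp hshift
  have herr := tendsto_sub_mul_tsum_of_abs_le (a := ((n + 1 : ℕ) : ℝ))
    ((summable_nat_add_rpow_neg (by positivity) (by norm_num)).mul_left _)
    (eventually_nhdsWithin_of_forall fun p (hp : _ < p) =>
      abs_ascFactorialRemainder_le hn (p := p) (by push_cast at hp; linarith))
  have hlim := htwo.mul (hzeta.add herr)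
  rw [add_zero, mul_one] at hlim
  refine hlim.congr' ?_
  filter_upwards [self_mem_nhdsWithin] with p (hp : _ < p)
  exact (sub_mul_tsum_factorial_div_eq hn (by push_cast at hp; linarith)).symm
end

section
/- Let N ≥ 2, s ∈ (0,1), p = N/s. Define the Moser-type family u_ε(x) = |ln ε|^{(N-s)/N} for |x| ≤ ε, u_ε(x) = |ln|x|| / |ln ε|^{s/N} for ε < |x| < 1, u_ε(x) = 0 for |x| ≥ 1. Then the term I₁(ε) := (2/|ln ε|) ∫_ε^1 ∫₀^ε |ln r - ln ε|^p r^{N-1} t^{N-1} (r²+t²)/|r²-t²|^{N+1} dr dt satisfies lim_{ε→0⁺} I₁(ε) = 0. -/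
/-!
The integrand is homogeneous of degree `-2` in `(r, t)`, so the substitution `r = ε a`, `t = ε b`
turns the double integral into `∫_1^{1/ε} ∫_0^1 K(a, b) da db` with a kernel `K` independent of
`ε`. For `b ≥ 1` one has `K(a, b) ≤ A(a) b^(-N-1)` with `A` integrable on `(0, 1)`: near
`a = 0` because `|log a|^p ≤ (2p)^p a^(-1/2)`, near `a = 1` because `|log a| ≤ 2 (1 - a)`,
`(1 - a) / (b - a) ≤ 1 / b` and `p > N`. So the double integral stays bounded, and the factor
`1 / |log ε|` sends `I₁(ε)` to `0`.
-/

open Real MeasureTheory Filter Topology Set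

lemma setIntegral_Ioo_eq_smul_integral_comp_mul {E : Type*} [NormedAddCommGroup E]
    [NormedSpace ℝ E] (f : ℝ → E) {c : ℝ} (hc : 0 < c) (a b : ℝ) :
    ∫ x in Ioo a b, f x = c • ∫ y in Ioo (a / c) (b / c), f (c * y) := by
  have := Measure.setIntegral_comp_smul_of_pos volume f (Ioo (a / c) (b / c)) hc
  simp only [smul_eq_mul, LinearOrderedField.smul_Ioo hc, mul_div_cancel₀ _ hc.ne',
    Module.finrank_self, pow_one] at this
  rw [this, smul_inv_smul₀ hc.ne']

lemma log_rpow_le_mul_rpow {x p δ : ℝ} (hx : 1 ≤ x) (hp : 0 < p) (hδ : 0 < δ) :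
    log x ^ p ≤ (p / δ) ^ p * x ^ δ := by
  have hx0 : 0 ≤ x := zero_le_one.trans hx
  have hlog : log x ≤ p / δ * x ^ (δ / p) := by
    convert log_le_rpow_div hx0 (div_pos hδ hp) using 1
    field_simp
  calc log x ^ p ≤ (p / δ * x ^ (δ / p)) ^ p := by gcongr; exact log_nonneg hx
    _ = (p / δ) ^ p * x ^ δ := by
      rw [mul_rpow (by positivity) (by positivity), ← rpow_mul hx0,
        div_mul_cancel₀ _ hp.ne']

lemma neg_log_le_two_mul_one_sub {a : ℝ} (ha : 1 / 2 ≤ a) (ha1 : a ≤ 1) :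
    -log a ≤ 2 * (1 - a) := by
  have ha0 : 0 < a := by linarith
  have hinv : a⁻¹ ≤ 2 := by rw [inv_le_comm₀ ha0 two_pos]; linarith
  calc -log a ≤ a⁻¹ - 1 := by linarith [one_sub_inv_le_log_of_pos ha0]
    _ = a⁻¹ * (1 - a) := by field_simp
    _ ≤ 2 * (1 - a) := by gcongr

noncomputable def moserKernel (N : ℕ) (p a b : ℝ) : ℝ :=
  |log a| ^ p * a ^ (N - 1) * b ^ (N - 1) * (a ^ 2 + b ^ 2) / |a ^ 2 - b ^ 2| ^ (N + 1)

lemma moserKernel_nonneg (N : ℕ) (p : ℝ) {a b : ℝ} (ha : 0 ≤ a) (hb : 0 ≤ b) :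
    0 ≤ moserKernel N p a b := by
  unfold moserKernel; positivity

lemma moserKernel_le {N : ℕ} (hN : 1 ≤ N) (p : ℝ) {a b : ℝ} (ha : 0 ≤ a) (hab : a < b) :
    moserKernel N p a b ≤ 2 * |log a| ^ p * a ^ (N - 1) / (b - a) ^ (N + 1) := by
  obtain ⟨M, rfl⟩ : ∃ M, N = M + 1 := ⟨N - 1, by omega⟩
  have hb : 0 < b := ha.trans_lt hab
  have hba : 0 < b - a := sub_pos.2 hab
  have hsq : (b - a) * b ≤ |a ^ 2 - b ^ 2| := by
    rw [abs_sub_comm, abs_of_nonneg (by nlinarith)]; nlinarith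
  unfold moserKernel
  rw [div_le_div_iff₀ (pow_pos ((mul_pos hba hb).trans_le hsq) _) (pow_pos hba _),
    Nat.add_sub_cancel]
  calc |log a| ^ p * a ^ M * b ^ M * (a ^ 2 + b ^ 2) * (b - a) ^ (M + 1 + 1)
      ≤ |log a| ^ p * a ^ M * b ^ M * (2 * b ^ 2) * (b - a) ^ (M + 1 + 1) := by
        gcongr; nlinarith
    _ = 2 * |log a| ^ p * a ^ M * ((b - a) * b) ^ (M + 1 + 1) := by rw [mul_pow]; ring
    _ ≤ 2 * |log a| ^ p * a ^ M * |a ^ 2 - b ^ 2| ^ (M + 1 + 1) := by gcongr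

lemma moserKernel_le_of_le_half {N : ℕ} (hN : 1 ≤ N) {p : ℝ} (hp : 0 < p) {a b : ℝ}
    (ha : 0 < a) (ha2 : a ≤ 1 / 2) (hb : 1 ≤ b) :
    moserKernel N p a b ≤
      2 ^ (N + 2) * (2 * p) ^ p * a ^ ((N : ℝ) - 3 / 2) * (b ^ (N + 1))⁻¹ := by
  have hlog : |log a| ^ p ≤ (2 * p) ^ p * a ^ (-(1 / 2) : ℝ) := by
    rw [abs_of_nonpos (log_nonpos ha.le (by linarith)), ← log_inv, rpow_neg ha.le,
      ← inv_rpow ha.le]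
    convert log_rpow_le_mul_rpow (one_le_inv₀ ha |>.2 (by linarith)) hp one_half_pos using 3
    ring
  have hpow : a ^ ((N : ℝ) - 3 / 2) = a ^ (-(1 / 2) : ℝ) * a ^ (N - 1) := by
    rw [← rpow_natCast, ← rpow_add ha, Nat.cast_sub hN]
    ring_nf
  calc moserKernel N p a b ≤ 2 * |log a| ^ p * a ^ (N - 1) / (b - a) ^ (N + 1) :=
        moserKernel_le hN p ha.le (by linarith)
    _ ≤ 2 * ((2 * p) ^ p * a ^ (-(1 / 2) : ℝ)) * a ^ (N - 1) / (b / 2) ^ (N + 1) := by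
        gcongr
        linarith
    _ = _ := by
        rw [hpow, div_pow]
        field_simp
        ring

lemma moserKernel_le_of_half_le {N : ℕ} (hN : 1 ≤ N) {p : ℝ} (hp : 0 < p) {a b : ℝ}
    (ha2 : 1 / 2 ≤ a) (ha1 : a < 1) (hb : 1 ≤ b) :
    moserKernel N p a b ≤ 2 ^ (p + 1) * (1 - a) ^ (p - N - 1) * (b ^ (N + 1))⁻¹ := by
  have ha : 0 < 1 - a := by linarith
  have hba : 0 < b - a := by linarith
  have hlog : |log a| ^ p ≤ 2 ^ p * ((1 - a) ^ (p - N - 1) * (1 - a) ^ (N + 1)) :=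
    calc |log a| ^ p ≤ (2 * (1 - a)) ^ p := by
          rw [abs_of_nonpos (log_nonpos (by linarith) ha1.le)]
          gcongr
          · linarith [log_nonpos (by linarith : 0 ≤ a) ha1.le]
          · exact neg_log_le_two_mul_one_sub ha2 ha1.le
      _ = _ := by
          rw [mul_rpow zero_le_two ha.le, ← rpow_natCast, ← rpow_add ha]
          push_cast
          ring_nf
  have hratio : (1 - a) ^ (N + 1) / (b - a) ^ (N + 1) ≤ (b ^ (N + 1))⁻¹ := by
    rw [← div_pow, ← inv_pow]
    refine pow_le_pow_left₀ (div_nonneg ha.le hba.le) ?_ _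
    rw [div_le_iff₀ hba, inv_mul_eq_div, le_div_iff₀ (by linarith)]
    nlinarith
  calc moserKernel N p a b ≤ 2 * |log a| ^ p * a ^ (N - 1) / (b - a) ^ (N + 1) :=
        moserKernel_le hN p (by linarith) (by linarith)
    _ ≤ 2 * (2 ^ p * ((1 - a) ^ (p - N - 1) * (1 - a) ^ (N + 1))) * 1 / (b - a) ^ (N + 1) := by
        gcongr
        exact pow_le_one₀ (by linarith) ha1.le
    _ = 2 ^ (p + 1) * (1 - a) ^ (p - N - 1) * ((1 - a) ^ (N + 1) / (b - a) ^ (N + 1)) := by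
        rw [rpow_add_one two_ne_zero]
        ring
    _ ≤ _ := by gcongr

noncomputable def moserProfile (N : ℕ) (p a : ℝ) : ℝ :=
  2 ^ (N + 2) * (2 * p) ^ p * a ^ ((N : ℝ) - 3 / 2) + 2 ^ (p + 1) * (1 - a) ^ (p - N - 1)

lemma moserKernel_le_moserProfile {N : ℕ} (hN : 1 ≤ N) {p : ℝ} (hp : 0 < p) {a b : ℝ}
    (ha : 0 < a) (ha1 : a < 1) (hb : 1 ≤ b) :
    moserKernel N p a b ≤ moserProfile N p a * (b ^ (N + 1))⁻¹ := by
  have h₁ : 0 ≤ 2 ^ (N + 2) * (2 * p) ^ p * a ^ ((N : ℝ) - 3 / 2) := by positivity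
  have h₂ : 0 ≤ 2 ^ (p + 1) * (1 - a) ^ (p - N - 1) := by
    have := sub_pos.2 ha1; positivity
  unfold moserProfile
  rcases le_total a (1 / 2) with ha2 | ha2
  · refine (moserKernel_le_of_le_half hN hp ha ha2 hb).trans ?_
    gcongr
    exact le_add_of_nonneg_right h₂
  · refine (moserKernel_le_of_half_le hN hp ha2 ha1 hb).trans ?_
    gcongr
    exact le_add_of_nonneg_left h₁

lemma integrableOn_moserProfile {N : ℕ} (hN : 1 ≤ N) {p : ℝ} (hp : (N : ℝ) < p) :
    IntegrableOn (moserProfile N p) (Ioo 0 1) := by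
  have hN' : (1 : ℝ) ≤ N := by exact_mod_cast hN
  have h₁ : IntegrableOn (fun a : ℝ ↦ a ^ ((N : ℝ) - 3 / 2)) (Ioo 0 1) :=
    (intervalIntegral.integrableOn_Ioo_rpow_iff one_pos).2 (by linarith)
  have h₂ : IntegrableOn (fun a : ℝ ↦ (1 - a) ^ (p - N - 1)) (Ioo 0 1) := by
    have := ((intervalIntegral.integrableOn_Ioo_rpow_iff one_pos).2
      (by linarith : (-1 : ℝ) < p - N - 1))
    rw [← intervalIntegrable_iff_integrableOn_Ioo_of_le zero_le_one] at this ⊢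
    simpa using (this.comp_sub_left 1).symm
  exact (h₁.const_mul _).add (h₂.const_mul _)

lemma integral_moserKernel_nonneg (N : ℕ) (p : ℝ) {b : ℝ} (hb : 0 ≤ b) :
    0 ≤ ∫ a in Ioo 0 1, moserKernel N p a b :=
  setIntegral_nonneg measurableSet_Ioo fun _ ha ↦ moserKernel_nonneg N p ha.1.le hb

lemma integral_moserKernel_le {N : ℕ} (hN : 1 ≤ N) {p : ℝ} (hp : (N : ℝ) < p) {b : ℝ}
    (hb : 1 ≤ b) :
    ∫ a in Ioo 0 1, moserKernel N p a b ≤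
      (∫ a in Ioo 0 1, moserProfile N p a) * b ^ (-(N : ℝ) - 1) := by
  have hp0 : 0 < p := (Nat.cast_nonneg N).trans_lt hp
  have hb' : (b ^ (N + 1))⁻¹ = b ^ (-(N : ℝ) - 1) := by
    rw [← rpow_natCast, ← rpow_neg (by linarith)]
    push_cast
    ring_nf
  rw [← integral_mul_const, ← hb']
  refine integral_mono_of_nonneg ?_ ((integrableOn_moserProfile hN hp).mul_const _) ?_
  · filter_upwards [ae_restrict_mem measurableSet_Ioo] with a ha
    exact moserKernel_nonneg N p ha.1.le (by linarith)
  · filter_upwards [ae_restrict_mem measurableSet_Ioo] with a ha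
    exact moserKernel_le_moserProfile hN hp0 ha.1 ha.2 hb

lemma integral_integral_moserKernel_le {N : ℕ} (hN : 1 ≤ N) {p : ℝ} (hp : (N : ℝ) < p)
    (R : ℝ) :
    ∫ b in Ioo 1 R, ∫ a in Ioo 0 1, moserKernel N p a b ≤
      (∫ a in Ioo 0 1, moserProfile N p a) * ∫ b in Ioi 1, b ^ (-(N : ℝ) - 1) := by
  have hN' : (1 : ℝ) ≤ N := by exact_mod_cast hN
  have hp0 : 0 < p := by linarith
  have hint : IntegrableOn
      (fun b : ℝ ↦ (∫ a in Ioo 0 1, moserProfile N p a) * b ^ (-(N : ℝ) - 1)) (Ioi 1) :=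
    (integrableOn_Ioi_rpow_of_lt (by linarith) one_pos).const_mul _
  have hprofile : 0 ≤ ∫ a in Ioo 0 1, moserProfile N p a := by
    refine setIntegral_nonneg measurableSet_Ioo fun a ha ↦ ?_
    have := sub_pos.2 ha.2
    have := ha.1
    unfold moserProfile
    positivity
  rw [← integral_const_mul]
  calc ∫ b in Ioo 1 R, ∫ a in Ioo 0 1, moserKernel N p a b
      ≤ ∫ b in Ioo 1 R, (∫ a in Ioo 0 1, moserProfile N p a) * b ^ (-(N : ℝ) - 1) := by
        refine integral_mono_of_nonneg ?_ (hint.mono_set Ioo_subset_Ioi_self) ?_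
        · filter_upwards [ae_restrict_mem measurableSet_Ioo] with b hb
          exact integral_moserKernel_nonneg N p (by linarith [hb.1])
        · filter_upwards [ae_restrict_mem measurableSet_Ioo] with b hb
          exact integral_moserKernel_le hN hp hb.1.le
    _ ≤ _ := by
        refine setIntegral_mono_set hint ?_ Ioo_subset_Ioi_self.eventuallyLE
        filter_upwards [ae_restrict_mem measurableSet_Ioi] with b hb
        have : (0 : ℝ) < b := one_pos.trans hb
        positivity

lemma moserKernel_div_sq {N : ℕ} (hN : 1 ≤ N) (p : ℝ) {ε a : ℝ} (hε : 0 < ε) (ha : 0 < a)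
    (b : ℝ) :
    |log (ε * a) - log ε| ^ p * (ε * a) ^ (N - 1) * (ε * b) ^ (N - 1) *
        ((ε * a) ^ 2 + (ε * b) ^ 2) / |(ε * a) ^ 2 - (ε * b) ^ 2| ^ (N + 1) =
      moserKernel N p a b / ε ^ 2 := by
  obtain ⟨M, rfl⟩ : ∃ M, N = M + 1 := ⟨N - 1, by omega⟩
  rw [log_mul hε.ne' ha.ne', add_sub_cancel_left,
    show (ε * a) ^ 2 - (ε * b) ^ 2 = ε ^ 2 * (a ^ 2 - b ^ 2) by ring, abs_mul,
    abs_of_pos (by positivity : 0 < ε ^ 2), moserKernel, Nat.add_sub_cancel]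
  rcases eq_or_ne (a ^ 2 - b ^ 2) 0 with h | h
  · simp [h]
  · field_simp
    ring

lemma integral_integral_eq_integral_integral_moserKernel {N : ℕ} (hN : 1 ≤ N) (p : ℝ)
    {ε : ℝ} (hε : 0 < ε) :
    ∫ t in Ioo ε 1, ∫ r in Ioo 0 ε,
        |log r - log ε| ^ p * r ^ (N - 1) * t ^ (N - 1) * (r ^ 2 + t ^ 2) /
          |r ^ 2 - t ^ 2| ^ (N + 1) =
      ∫ b in Ioo 1 ε⁻¹, ∫ a in Ioo 0 1, moserKernel N p a b := by
  have hinner (b : ℝ) : ∫ r in Ioo 0 ε, |log r - log ε| ^ p * r ^ (N - 1) *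
      (ε * b) ^ (N - 1) * (r ^ 2 + (ε * b) ^ 2) / |r ^ 2 - (ε * b) ^ 2| ^ (N + 1) =
      (∫ a in Ioo 0 1, moserKernel N p a b) / ε := by
    rw [setIntegral_Ioo_eq_smul_integral_comp_mul _ hε, smul_eq_mul, zero_div, div_self hε.ne',
      setIntegral_congr_fun measurableSet_Ioo fun a ha ↦ moserKernel_div_sq hN p hε ha.1 b,
      integral_div]
    field_simp
  rw [setIntegral_Ioo_eq_smul_integral_comp_mul _ hε, smul_eq_mul, div_self hε.ne', one_div]
  simp_rw [hinner, integral_div]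
  field_simp

/-- For the Moser-type family, the term
`I₁(ε) = (2/|ln ε|) ∫_ε^1 ∫_0^ε |ln r - ln ε|^p r^(N-1) t^(N-1) (r²+t²)/|r²-t²|^(N+1) dr dt`
tends to `0` as `ε → 0⁺`, where `p = N/s`, `s ∈ (0,1)`, `N ≥ 2`. -/
theorem stmt12 (N : ℕ) (hN : 2 ≤ N) (s : ℝ) (hs : s ∈ Set.Ioo (0 : ℝ) 1)
    (p : ℝ) (hp : p = (N : ℝ) / s) :
    Tendsto (fun ε : ℝ => (2 / |Real.log ε|) *
        ∫ t in Set.Ioo ε 1, ∫ r in Set.Ioo (0 : ℝ) ε,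
          |Real.log r - Real.log ε| ^ p * r ^ (N - 1) * t ^ (N - 1)
            * (r ^ 2 + t ^ 2) / |r ^ 2 - t ^ 2| ^ (N + 1))
      (nhdsWithin 0 (Set.Ioi 0)) (nhds 0) := by
  have hN1 : 1 ≤ N := by omega
  have hpN : (N : ℝ) < p := by
    have : (0 : ℝ) < N := by positivity
    rw [hp, lt_div_iff₀ hs.1]
    nlinarith [hs.2]
  set C := (∫ a in Ioo 0 1, moserProfile N p a) * ∫ b in Ioi 1, b ^ (-(N : ℝ) - 1)
  have hupper : Tendsto (fun ε ↦ 2 * C / |log ε|) (𝓝[>] 0) (𝓝 0) :=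
    tendsto_const_nhds.div_atTop (tendsto_abs_atBot_atTop.comp tendsto_log_nhdsGT_zero)
  refine squeeze_zero' ?_ ?_ hupper <;>
    filter_upwards [self_mem_nhdsWithin] with ε (hε : 0 < ε) <;>
    rw [integral_integral_eq_integral_integral_moserKernel hN1 p hε]
  · refine mul_nonneg (by positivity) (setIntegral_nonneg measurableSet_Ioo fun b hb ↦ ?_)
    exact integral_moserKernel_nonneg N p (by linarith [hb.1])
  · rw [div_mul_eq_mul_div]
    gcongr
    exact integral_integral_moserKernel_le hN1 hpN _
end

section
/- Let N ≥ 2, p > N, and define I₃(ε) := 2|ln ε|^{p-1} ∫₁^∞ ∫₀^ε r^{N-1} t^{N-1} (r²+t²)/|r²-t²|^{N+1} dr dt = (2 ε^N |ln ε|^{p-1}/N) ∫₁^∞ r^{N-1}/(r²-ε²)^N dr. Then lim_{ε→0⁺} I₃(ε) = 0. -/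
/-!
For `t > ε` the inner integrand is `t^(N-1)/N` times the derivative of `r ↦ r^N/(t² - r²)^N`,
which gives the closed form. For `|ε| ≤ 1/2` the remaining integral over `t > 1` is dominated by
`2^N ∫₁^∞ t⁻² dt = 2^N`, while `|ln ε|^(p-1) ε^N → 0` because any power of the logarithm is
negligible against a positive power of `ε`.
-/

open Real MeasureTheory Filter Topology Set

lemma hasDerivAt_pow_succ_div_sq_sub_sq_pow_succ (m : ℕ) {t x : ℝ} (hx : t ^ 2 - x ^ 2 ≠ 0) :
    HasDerivAt (fun r => r ^ (m + 1) / (t ^ 2 - r ^ 2) ^ (m + 1))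
      ((m + 1) * x ^ m * (x ^ 2 + t ^ 2) / (t ^ 2 - x ^ 2) ^ (m + 2)) x := by
  have hnum : HasDerivAt (fun r : ℝ => r ^ (m + 1)) ((m + 1) * x ^ m) x := by
    simpa using hasDerivAt_pow (m + 1) x
  have hden : HasDerivAt (fun r : ℝ => (t ^ 2 - r ^ 2) ^ (m + 1))
      ((m + 1) * (t ^ 2 - x ^ 2) ^ m * -(2 * x)) x := by
    simpa using ((hasDerivAt_pow 2 x).const_sub (t ^ 2)).fun_pow (m + 1)
  refine (hnum.fun_div hden (pow_ne_zero _ hx)).congr_deriv ?_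
  field_simp
  ring

lemma integral_Ioo_pow_mul_pow_div_abs_sq_sub_sq_pow {N : ℕ} (hN : 0 < N) {ε t : ℝ}
    (hε : 0 ≤ ε) (hεt : ε < t) :
    ∫ r in Ioo 0 ε, r ^ (N - 1) * t ^ (N - 1) * (r ^ 2 + t ^ 2) / |r ^ 2 - t ^ 2| ^ (N + 1)
      = ε ^ N / N * (t ^ (N - 1) / (t ^ 2 - ε ^ 2) ^ N) := by
  obtain ⟨m, rfl⟩ : ∃ m, N = m + 1 := ⟨N - 1, by omega⟩
  have hsq : ∀ r ∈ uIcc 0 ε, r ^ 2 < t ^ 2 := fun r hr => by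
    rw [uIcc_of_le hε] at hr
    nlinarith [hr.1, hr.2]
  have hderiv : ∀ r ∈ uIcc 0 ε,
      HasDerivAt (fun r => t ^ m / (m + 1) * (r ^ (m + 1) / (t ^ 2 - r ^ 2) ^ (m + 1)))
        (r ^ m * t ^ m * (r ^ 2 + t ^ 2) / |r ^ 2 - t ^ 2| ^ (m + 1 + 1)) r := fun r hr => by
    refine ((hasDerivAt_pow_succ_div_sq_sub_sq_pow_succ m
      (sub_ne_zero.2 (hsq r hr).ne')).const_mul (t ^ m / (m + 1))).congr_deriv ?_
    rw [abs_of_neg (sub_neg.2 (hsq r hr)), neg_sub]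
    field_simp
  have hcont : ContinuousOn
      (fun r => r ^ m * t ^ m * (r ^ 2 + t ^ 2) / |r ^ 2 - t ^ 2| ^ (m + 1 + 1)) (uIcc 0 ε) :=
    ContinuousOn.div (by fun_prop) (by fun_prop) fun r hr =>
      pow_ne_zero _ (abs_ne_zero.2 (sub_ne_zero.2 (hsq r hr).ne))
  simp only [Nat.add_sub_cancel]
  rw [← integral_Ioc_eq_integral_Ioo, ← intervalIntegral.integral_of_le hε,
    intervalIntegral.integral_eq_sub_of_hasDerivAt hderiv hcont.intervalIntegrable]
  simp only [zero_pow m.succ_ne_zero, zero_div, mul_zero, sub_zero, Nat.cast_succ]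
  ring

lemma integral_Ioi_integral_Ioo_eq {N : ℕ} (hN : 0 < N) {ε : ℝ} (hε : 0 ≤ ε)
    (hε1 : ε ≤ 1) :
    ∫ t in Ioi 1, ∫ r in Ioo 0 ε,
        r ^ (N - 1) * t ^ (N - 1) * (r ^ 2 + t ^ 2) / |r ^ 2 - t ^ 2| ^ (N + 1)
      = ε ^ N / N * ∫ t in Ioi 1, t ^ (N - 1) / (t ^ 2 - ε ^ 2) ^ N := by
  rw [← integral_const_mul]
  exact setIntegral_congr_fun measurableSet_Ioi fun t ht =>
    integral_Ioo_pow_mul_pow_div_abs_sq_sub_sq_pow hN hε (hε1.trans_lt ht)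

lemma norm_pow_div_sq_sub_sq_pow_le {N : ℕ} (hN : 0 < N) {ε t : ℝ} (hε : |ε| ≤ 1 / 2)
    (ht : 1 ≤ t) :
    ‖t ^ (N - 1) / (t ^ 2 - ε ^ 2) ^ N‖ ≤ 2 ^ N * t ^ (-2 : ℝ) := by
  obtain ⟨m, rfl⟩ : ∃ m, N = m + 1 := ⟨N - 1, by omega⟩
  have hε2 : ε ^ 2 ≤ 1 / 4 := by nlinarith [sq_abs ε, abs_nonneg ε]
  have hhalf : t ^ 2 / 2 ≤ t ^ 2 - ε ^ 2 := by nlinarith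
  have htm : 1 ≤ t ^ m := one_le_pow₀ ht
  have ht0 : 0 < t := by linarith
  simp only [Nat.add_sub_cancel]
  rw [Real.norm_of_nonneg (div_nonneg (by positivity) (pow_nonneg (by nlinarith) _)),
    rpow_neg ht0.le, rpow_two]
  calc t ^ m / (t ^ 2 - ε ^ 2) ^ (m + 1)
      ≤ t ^ m / (t ^ 2 / 2) ^ (m + 1) := by gcongr
    _ = 2 ^ (m + 1) * (t ^ 2)⁻¹ / t ^ m := by rw [div_pow]; field_simp; ring
    _ ≤ 2 ^ (m + 1) * (t ^ 2)⁻¹ := div_le_self (by positivity) htm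

lemma norm_integral_Ioi_pow_div_sq_sub_sq_pow_le {N : ℕ} (hN : 0 < N) {ε : ℝ}
    (hε : |ε| ≤ 1 / 2) :
    ‖∫ t in Ioi 1, t ^ (N - 1) / (t ^ 2 - ε ^ 2) ^ N‖ ≤ 2 ^ N := by
  have hint : IntegrableOn (fun t : ℝ => t ^ (-2 : ℝ)) (Ioi 1) :=
    integrableOn_Ioi_rpow_of_lt (by norm_num) one_pos
  calc ‖∫ t in Ioi 1, t ^ (N - 1) / (t ^ 2 - ε ^ 2) ^ N‖
      ≤ ∫ t in Ioi 1, 2 ^ N * t ^ (-2 : ℝ) :=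
        norm_integral_le_of_norm_le (hint.const_mul _) <|
          (ae_restrict_mem measurableSet_Ioi).mono fun t ht =>
            norm_pow_div_sq_sub_sq_pow_le hN hε (le_of_lt ht)
    _ = 2 ^ N := by
        rw [integral_const_mul, integral_Ioi_rpow_of_lt (by norm_num) one_pos]
        norm_num

lemma tendsto_abs_log_rpow_mul_rpow_nhdsGT_zero (a : ℝ) {b : ℝ} (hb : 0 < b) :
    Tendsto (fun x => |log x| ^ a * x ^ b) (𝓝[>] 0) (𝓝 0) :=
  (isLittleO_abs_log_rpow_rpow_nhdsGT_zero a (neg_lt_zero.2 hb)).tendsto_div_nhds_zero.congr' <|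
    eventually_mem_nhdsWithin.mono fun x hx => by rw [rpow_neg hx.out.le, div_inv_eq_mul]

theorem stmt14_general (N : ℕ) (hN : 2 ≤ N) (p : ℝ) :
    (∀ ε ∈ Set.Ioo (0 : ℝ) 1,
      2 * |Real.log ε| ^ (p - 1) *
        ∫ t in Set.Ioi (1 : ℝ), ∫ r in Set.Ioo (0 : ℝ) ε,
          r ^ (N - 1) * t ^ (N - 1) * (r ^ 2 + t ^ 2) / |r ^ 2 - t ^ 2| ^ (N + 1)
      = (2 * ε ^ N * |Real.log ε| ^ (p - 1) / N) *
          ∫ r in Set.Ioi (1 : ℝ), r ^ (N - 1) / (r ^ 2 - ε ^ 2) ^ N) ∧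
    Tendsto (fun ε : ℝ => 2 * |Real.log ε| ^ (p - 1) *
        ∫ t in Set.Ioi (1 : ℝ), ∫ r in Set.Ioo (0 : ℝ) ε,
          r ^ (N - 1) * t ^ (N - 1) * (r ^ 2 + t ^ 2) / |r ^ 2 - t ^ 2| ^ (N + 1))
      (nhdsWithin 0 (Set.Ioi 0)) (nhds 0) := by
  have hN0 : 0 < N := by omega
  have hI := fun ε (hε : ε ∈ Ioo (0 : ℝ) 1) =>
    integral_Ioi_integral_Ioo_eq hN0 hε.1.le hε.2.le
  refine ⟨fun ε hε => by rw [hI ε hε]; ring, ?_⟩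
  have hfactor :
      Tendsto (fun ε : ℝ => 2 * ε ^ N * |log ε| ^ (p - 1) / N) (𝓝[>] 0) (𝓝 0) := by
    have h := (tendsto_abs_log_rpow_mul_rpow_nhdsGT_zero (p - 1) (Nat.cast_pos.2 hN0)).const_mul
      (2 / N : ℝ)
    rw [mul_zero] at h
    refine h.congr fun ε => ?_
    rw [rpow_natCast]
    ring
  have hbdd : IsBoundedUnder (· ≤ ·) (𝓝[>] 0)
      ((‖·‖) ∘ fun ε : ℝ => ∫ t in Ioi 1, t ^ (N - 1) / (t ^ 2 - ε ^ 2) ^ N) :=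
    isBoundedUnder_of_eventually_le (a := 2 ^ N) <| by
      filter_upwards [Ioo_mem_nhdsGT (by norm_num : (0 : ℝ) < 1 / 2)] with ε hε
      exact norm_integral_Ioi_pow_div_sq_sub_sq_pow_le hN0
        (abs_le.2 ⟨by linarith [hε.1], hε.2.le⟩)
  refine (hfactor.zero_mul_isBoundedUnder_le hbdd).congr' ?_
  filter_upwards [Ioo_mem_nhdsGT one_pos] with ε hε
  rw [hI ε hε]
  ring

/-- For `N ≥ 2`, `p > N`, the term
`I₃(ε) = 2|ln ε|^(p-1) ∫₁^∞ ∫₀^ε r^(N-1) t^(N-1)(r²+t²)/|r²-t²|^(N+1) dr dt`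
equals `(2 ε^N |ln ε|^(p-1)/N) ∫₁^∞ r^(N-1)/(r²-ε²)^N dr` and tends to `0` as `ε → 0⁺`. -/
theorem stmt14 (N : ℕ) (hN : 2 ≤ N) (p : ℝ) (hp : (N : ℝ) < p) :
    (∀ ε ∈ Set.Ioo (0 : ℝ) 1,
      2 * |Real.log ε| ^ (p - 1) *
        ∫ t in Set.Ioi (1 : ℝ), ∫ r in Set.Ioo (0 : ℝ) ε,
          r ^ (N - 1) * t ^ (N - 1) * (r ^ 2 + t ^ 2) / |r ^ 2 - t ^ 2| ^ (N + 1)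
      = (2 * ε ^ N * |Real.log ε| ^ (p - 1) / N) *
          ∫ r in Set.Ioi (1 : ℝ), r ^ (N - 1) / (r ^ 2 - ε ^ 2) ^ N) ∧
    Tendsto (fun ε : ℝ => 2 * |Real.log ε| ^ (p - 1) *
        ∫ t in Set.Ioi (1 : ℝ), ∫ r in Set.Ioo (0 : ℝ) ε,
          r ^ (N - 1) * t ^ (N - 1) * (r ^ 2 + t ^ 2) / |r ^ 2 - t ^ 2| ^ (N + 1))
      (nhdsWithin 0 (Set.Ioi 0)) (nhds 0) :=
  stmt14_general N hN p
end

section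
/- Let γ_{s,N} := 2(Nω_N)² Γ(p+1)/N! · Σ_{k=0}^∞ (N+k-1)!/k! · 1/(N+2k)^p with p = N/s, where ω_N = π^{N/2}/Γ(N/2+1). Then lim_{s→1⁻} (1-s) γ_{s,N} = N ω_N² / 2^{N-1}. -/
/-!
Put `p = N / s`, so that `(1 - s) γ s = 2 (N ω)² Γ(p + 1) / N! · (s / N) · (p - N) ∑ₖ aₖ(p)` with
`aₖ(p) = (N + k - 1)! / k! · (N + 2k)^(-p)`, and `Γ(p + 1) / N! → 1`, `s / N → 1 / N`.
Since `(N + k - 1)! / k! = (k + 1)^(N - 1) (1 + O(1/k))` and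
`(N + 2k)^(-p) = (2k + 2)^(-p) (1 + O(1/k))`, the summand differs from
`tₖ(p) = (k + 1)^(N - 1) (2k + 2)^(-p) = 2^(-p) (k + 1)^(-(p - N + 1))` by `O((k + 1)^(-2))`
uniformly for `p ∈ [N, N + 1]`. A uniformly summable perturbation does not affect the limit of
`(p - N) ∑ₖ`, and `(p - N) ∑ₖ tₖ(p) → 2^(-N)` by the simple pole of `ζ` at `1`.
-/

open Real Filter Topology
open scoped Nat

theorem Filter.Tendsto.mul_tsum_of_abs_sub_le {α : Type*} {l : Filter α} {w : α → ℝ}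
    {f g : α → ℕ → ℝ} {e : ℕ → ℝ} {L : ℝ} (hlim : Tendsto (fun a ↦ w a * ∑' k, f a k) l (𝓝 L))
    (hw : Tendsto w l (𝓝 0)) (he : Summable e) (hf : ∀ᶠ a in l, Summable (f a))
    (hgf : ∀ᶠ a in l, ∀ k, |g a k - f a k| ≤ e k) :
    Tendsto (fun a ↦ w a * ∑' k, g a k) l (𝓝 L) := by
  have hrem : Tendsto (fun a ↦ w a * ∑' k, (g a k - f a k)) l (𝓝 0) := by
    refine squeeze_zero_norm' ?_
      (by simpa only [norm_zero, zero_mul] using hw.norm.mul_const (∑' k, e k))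
    filter_upwards [hgf] with a ha
    rw [norm_mul]
    gcongr
    exact tsum_of_norm_bounded (f := fun k ↦ g a k - f a k) he.hasSum ha
  refine (add_zero L ▸ hlim.add hrem).congr' ?_
  filter_upwards [hf, hgf] with a hfa ha
  have hd : Summable fun k ↦ g a k - f a k := he.of_norm_bounded ha
  rw [← mul_add, ← hfa.tsum_add hd]
  simp

theorem summable_one_div_succ_rpow {q : ℝ} (hq : 1 < q) :
    Summable fun k : ℕ ↦ 1 / ((k : ℝ) + 1) ^ q := by
  refine ((Real.summable_one_div_nat_add_rpow 1 q).2 hq).congr fun k ↦ ?_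
  rw [abs_of_pos (by positivity)]

theorem tendsto_sub_one_mul_tsum_one_div_succ_rpow :
    Tendsto (fun q : ℝ ↦ (q - 1) * ∑' k : ℕ, 1 / ((k : ℝ) + 1) ^ q) (𝓝[>] 1) (𝓝 1) := by
  refine tendsto_sub_mul_tsum_nat_rpow.congr' ?_
  filter_upwards [self_mem_nhdsWithin] with q (hq : 1 < q)
  rw [(summable_one_div_nat_rpow.mpr hq).tsum_eq_zero_add]
  simp [zero_rpow (by linarith : q ≠ 0)]

theorem add_pow_sub_pow_le {x c : ℝ} (hx : 1 ≤ x) (hc : 0 ≤ c) (n : ℕ) :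
    (x + c) ^ n - x ^ n ≤ c * n * (1 + c) ^ (n - 1) * x ^ (n - 1) := by
  have hmax : max |x + c| |x| = x + c := by
    rw [abs_of_nonneg, abs_of_nonneg, max_eq_left] <;> linarith
  have h := abs_pow_sub_pow_le (x + c) x n
  rw [add_sub_cancel_left, abs_of_nonneg hc, hmax] at h
  calc (x + c) ^ n - x ^ n ≤ c * n * (x + c) ^ (n - 1) := (le_abs_self _).trans h
    _ ≤ c * n * ((1 + c) * x) ^ (n - 1) := by gcongr; nlinarith
    _ = _ := by rw [mul_pow]; ring

theorem inv_rpow_sub_inv_rpow_add_le {x h p : ℝ} (hx : 0 < x) (hh : 0 ≤ h) (hp : 1 ≤ p) :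
    (x ^ p)⁻¹ - ((x + h) ^ p)⁻¹ ≤ p * h / x * (x ^ p)⁻¹ := by
  have hxh : 0 < x + h := by linarith
  have hbern : 1 - p * h / x ≤ (x / (x + h)) ^ p := by
    have := one_add_mul_self_le_rpow_one_add (s := -(h / (x + h)))
      (by rw [neg_le_neg_iff, div_le_one hxh]; linarith) hp
    calc 1 - p * h / x ≤ 1 + p * -(h / (x + h)) := by
          rw [mul_neg, ← sub_eq_add_neg, mul_div_assoc]
          gcongr
          linarith
      _ ≤ _ := by convert this using 2; field_simp; ring
  rw [div_rpow hx.le hxh.le] at hbern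
  have hxp := rpow_pos_of_pos hx p
  have key : x ^ p / (x + h) ^ p * (x ^ p)⁻¹ = ((x + h) ^ p)⁻¹ := by field_simp
  have := mul_le_mul_of_nonneg_right hbern (inv_nonneg.2 hxp.le)
  linarith

section ComparisonTerm

variable {N : ℕ} {p : ℝ}

theorem pow_div_two_mul_rpow_eq (hN : 1 ≤ N) {x : ℝ} (hx : 0 < x) (p : ℝ) :
    x ^ (N - 1) / (2 * x) ^ p = (2 ^ p)⁻¹ * (1 / x ^ (p - N + 1)) := by
  have : x ^ (p - N + 1) = x ^ p / x ^ (N - 1) := by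
    rw [← rpow_natCast, Nat.cast_sub hN, ← rpow_sub hx]
    ring_nf
  rw [this, mul_rpow zero_le_two hx.le]
  have := rpow_pos_of_pos hx p
  field_simp

theorem pow_div_two_mul_rpow_le (hN : 2 ≤ N) {x : ℝ} (hx : 1 ≤ x) (hp : N ≤ p) :
    x ^ (N - 2) / (2 * x) ^ p ≤ 1 / x ^ 2 := by
  have hx0 : 0 < x := by linarith
  calc x ^ (N - 2) / (2 * x) ^ p ≤ x ^ (N - 2) / (2 * x) ^ (N : ℝ) := by
        gcongr
        · linarith
    _ = x ^ (N - 2) / (2 ^ N * (x ^ (N - 2) * x ^ 2)) := by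
        rw [rpow_natCast, mul_pow, ← pow_add, Nat.sub_add_cancel hN]
    _ ≤ 1 / x ^ 2 := by
        rw [div_le_div_iff₀ (by positivity) (by positivity)]
        have : (1 : ℝ) ≤ 2 ^ N := one_le_pow₀ one_le_two
        have : 0 ≤ x ^ (N - 2) * x ^ 2 := by positivity
        nlinarith

theorem summable_pow_div_two_mul_rpow (hN : 1 ≤ N) (hp : N < p) :
    Summable fun k : ℕ ↦ ((k : ℝ) + 1) ^ (N - 1) / (2 * ((k : ℝ) + 1)) ^ p := by
  simp_rw [pow_div_two_mul_rpow_eq hN (Nat.cast_add_one_pos _)]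
  exact (summable_one_div_succ_rpow (by linarith)).mul_left _

theorem tendsto_sub_mul_tsum_pow_div_two_mul_rpow (hN : 1 ≤ N) :
    Tendsto (fun p : ℝ ↦ (p - N) * ∑' k : ℕ, ((k : ℝ) + 1) ^ (N - 1) / (2 * ((k : ℝ) + 1)) ^ p)
      (𝓝[>] (N : ℝ)) (𝓝 (2 ^ N)⁻¹) := by
  have hshift : Tendsto (fun p : ℝ ↦ p - N + 1) (𝓝[>] (N : ℝ)) (𝓝[>] 1) := by
    have := (by fun_prop : Continuous fun p : ℝ ↦ p - N + 1).continuousWithinAt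
      (s := Set.Ioi (N : ℝ)) (x := N) |>.tendsto_nhdsWithin
      (t := Set.Ioi 1) fun p (hp : (N : ℝ) < p) ↦ show 1 < p - N + 1 by linarith
    simpa using this
  have htwo : Tendsto (fun p : ℝ ↦ ((2 : ℝ) ^ p)⁻¹) (𝓝[>] (N : ℝ)) (𝓝 (2 ^ N)⁻¹) := by
    rw [← rpow_natCast]
    exact ((continuousAt_const_rpow two_ne_zero).inv₀ (by positivity)).tendsto.mono_left
      nhdsWithin_le_nhds
  refine (mul_one ((2 : ℝ) ^ N)⁻¹ ▸
    htwo.mul (tendsto_sub_one_mul_tsum_one_div_succ_rpow.comp hshift)).congr fun p ↦ ?_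
  simp_rw [pow_div_two_mul_rpow_eq hN (Nat.cast_add_one_pos _), tsum_mul_left, Function.comp]
  ring

end ComparisonTerm

theorem factorial_add_sub_one_div_factorial {N : ℕ} (hN : 1 ≤ N) (k : ℕ) :
    ((N + k - 1)! : ℝ) / k ! = (k + 1).ascFactorial (N - 1) := by
  rw [show N + k - 1 = k + (N - 1) by omega, ← Nat.factorial_mul_ascFactorial, Nat.cast_mul,
    mul_div_cancel_left₀ _ (by positivity)]

section FactorialTerm

variable {N : ℕ} {p : ℝ} (k : ℕ)

theorem pow_le_factorial_add_sub_one_div_factorial (hN : 1 ≤ N) :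
    ((k : ℝ) + 1) ^ (N - 1) ≤ ((N + k - 1)! : ℝ) / k ! := by
  rw [factorial_add_sub_one_div_factorial hN]
  exact_mod_cast Nat.pow_succ_le_ascFactorial (k + 1) (N - 1)

theorem factorial_add_sub_one_div_factorial_le (hN : 2 ≤ N) :
    ((N + k - 1)! : ℝ) / k ! ≤ ((k : ℝ) + 1 + ((N : ℝ) - 2)) ^ (N - 1) := by
  rw [factorial_add_sub_one_div_factorial (by omega)]
  have h : ((k : ℝ) + 1 + ((N : ℝ) - 2)) = ((k + (N - 1) : ℕ) : ℝ) := by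
    push_cast [Nat.cast_sub (by omega : 1 ≤ N)]; ring
  rw [h]
  exact_mod_cast Nat.ascFactorial_le_pow_add k (N - 1)

theorem factorial_div_mul_sub_le (hN : 2 ≤ N) (hp : 0 ≤ p) :
    ((N + k - 1)! : ℝ) / k ! * (1 / ((N : ℝ) + 2 * k) ^ p)
      - ((k : ℝ) + 1) ^ (N - 1) / (2 * ((k : ℝ) + 1)) ^ p
      ≤ ((N : ℝ) - 2) * (N - 1) * ((N : ℝ) - 1) ^ (N - 2) *
          (((k : ℝ) + 1) ^ (N - 2) / (2 * ((k : ℝ) + 1)) ^ p) := by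
  set x : ℝ := (k : ℝ) + 1
  have hx : 1 ≤ x := by simp [x]
  have hc : (0 : ℝ) ≤ (N : ℝ) - 2 := by rw [sub_nonneg]; exact_mod_cast hN
  have hsub := add_pow_sub_pow_le hx hc (N - 1)
  rw [show N - 1 - 1 = N - 2 by omega] at hsub
  calc ((N + k - 1)! : ℝ) / k ! * (1 / ((N : ℝ) + 2 * k) ^ p) - x ^ (N - 1) / (2 * x) ^ p
      ≤ (x + ((N : ℝ) - 2)) ^ (N - 1) * (1 / (2 * x) ^ p) - x ^ (N - 1) / (2 * x) ^ p := by
        gcongr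
        · exact factorial_add_sub_one_div_factorial_le k hN
        · linarith
    _ = ((x + ((N : ℝ) - 2)) ^ (N - 1) - x ^ (N - 1)) / (2 * x) ^ p := by ring
    _ ≤ _ := by
        rw [mul_div_assoc']
        gcongr
        exact hsub.trans_eq (by push_cast [Nat.cast_sub (by omega : 1 ≤ N)]; ring)

theorem sub_factorial_div_mul_le (hN : 2 ≤ N) (hp : 1 ≤ p) :
    ((k : ℝ) + 1) ^ (N - 1) / (2 * ((k : ℝ) + 1)) ^ p
      - ((N + k - 1)! : ℝ) / k ! * (1 / ((N : ℝ) + 2 * k) ^ p)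
      ≤ p * ((N : ℝ) - 2) / 2 * (((k : ℝ) + 1) ^ (N - 2) / (2 * ((k : ℝ) + 1)) ^ p) := by
  set x : ℝ := (k : ℝ) + 1
  have hx : 0 < x := by positivity
  have hc : (0 : ℝ) ≤ (N : ℝ) - 2 := by rw [sub_nonneg]; exact_mod_cast hN
  have hmv := inv_rpow_sub_inv_rpow_add_le (by positivity : 0 < 2 * x) hc hp
  have hpow : x ^ (N - 1) = x ^ (N - 2) * x := by
    rw [← pow_succ]; congr 1; omega
  calc x ^ (N - 1) / (2 * x) ^ p - ((N + k - 1)! : ℝ) / k ! * (1 / ((N : ℝ) + 2 * k) ^ p)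
      ≤ x ^ (N - 1) * (((2 * x) ^ p)⁻¹ - ((2 * x + ((N : ℝ) - 2)) ^ p)⁻¹) := by
        rw [show (N : ℝ) + 2 * k = 2 * x + ((N : ℝ) - 2) by ring, mul_sub, div_eq_mul_inv, one_div]
        gcongr
        exact pow_le_factorial_add_sub_one_div_factorial k (by omega)
    _ ≤ x ^ (N - 1) * (p * ((N : ℝ) - 2) / (2 * x) * ((2 * x) ^ p)⁻¹) := by gcongr
    _ = _ := by rw [hpow]; field_simp

theorem exists_abs_factorial_div_mul_sub_le (hN : 2 ≤ N) :
    ∃ D : ℝ, ∀ p ∈ Set.Icc (N : ℝ) (N + 1), ∀ k : ℕ,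
      |((N + k - 1)! : ℝ) / k ! * (1 / ((N : ℝ) + 2 * k) ^ p)
        - ((k : ℝ) + 1) ^ (N - 1) / (2 * ((k : ℝ) + 1)) ^ p| ≤ D * (1 / ((k : ℝ) + 1) ^ 2) := by
  set C₁ : ℝ := ((N : ℝ) - 2) * (N - 1) * ((N : ℝ) - 1) ^ (N - 2)
  set C₂ : ℝ := (N + 1) * ((N : ℝ) - 2) / 2
  have hc : (0 : ℝ) ≤ (N : ℝ) - 2 := by rw [sub_nonneg]; exact_mod_cast hN
  have hC₁ : 0 ≤ C₁ := mul_nonneg (mul_nonneg hc (by linarith)) (pow_nonneg (by linarith) _)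
  have hC₂ : 0 ≤ C₂ := by positivity
  refine ⟨C₁ + C₂, fun p hp k ↦ ?_⟩
  have hup := factorial_div_mul_sub_le k hN ((Nat.cast_nonneg N).trans hp.1)
  have hlow := sub_factorial_div_mul_le k hN (le_trans (by norm_cast; omega) hp.1)
  have hB := pow_div_two_mul_rpow_le hN (x := (k : ℝ) + 1) (by simp) hp.1
  set B := ((k : ℝ) + 1) ^ (N - 2) / (2 * ((k : ℝ) + 1)) ^ p
  have hB0 : 0 ≤ B := by positivity
  have hpC₂ : p * ((N : ℝ) - 2) / 2 ≤ C₂ := by simp only [C₂]; gcongr; exact hp.2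
  have h₁ := mul_le_mul_of_nonneg_left hB hC₁
  have h₂ := mul_le_mul hpC₂ hB hB0 hC₂
  have : 0 ≤ 1 / ((k : ℝ) + 1) ^ 2 := by positivity
  rw [abs_sub_le_iff, add_mul]
  constructor <;> nlinarith

end FactorialTerm

theorem tendsto_sub_mul_tsum_factorial_div {N : ℕ} (hN : 2 ≤ N) :
    Tendsto (fun p : ℝ ↦ (p - N) *
        ∑' k : ℕ, ((N + k - 1)! : ℝ) / k ! * (1 / ((N : ℝ) + 2 * k) ^ p))
      (𝓝[>] (N : ℝ)) (𝓝 (2 ^ N)⁻¹) := by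
  obtain ⟨D, hD⟩ := exists_abs_factorial_div_mul_sub_le hN
  have hsq : Summable fun k : ℕ ↦ 1 / ((k : ℝ) + 1) ^ 2 := by
    exact_mod_cast summable_one_div_succ_rpow (q := 2) one_lt_two
  refine (tendsto_sub_mul_tsum_pow_div_two_mul_rpow (by omega)).mul_tsum_of_abs_sub_le
    (tendsto_sub_nhds_zero_iff.2 nhdsWithin_le_nhds) (hsq.mul_left D) ?_ ?_
  · filter_upwards [self_mem_nhdsWithin] with p hp
    exact summable_pow_div_two_mul_rpow (by omega) hp
  · filter_upwards [Ioc_mem_nhdsGT (by linarith : (N : ℝ) < N + 1)] with p hp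
    exact hD p (Set.Ioc_subset_Icc_self hp)

theorem tendsto_const_div_nhdsLT_one {c : ℝ} (hc : 0 < c) :
    Tendsto (fun s : ℝ ↦ c / s) (𝓝[<] 1) (𝓝[>] c) := by
  refine tendsto_nhdsWithin_iff.2 ⟨?_, ?_⟩
  · have : ContinuousAt (fun s : ℝ ↦ c / s) 1 := continuousAt_const.div continuousAt_id one_ne_zero
    simpa using this.tendsto.mono_left nhdsWithin_le_nhds
  · filter_upwards [Ioo_mem_nhdsLT zero_lt_one] with s hs
    rw [Set.mem_Ioi, lt_div_iff₀ hs.1]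
    nlinarith [hs.2]

theorem tendsto_Gamma_const_div_add_one (N : ℕ) :
    Tendsto (fun s : ℝ ↦ Gamma (N / s + 1)) (𝓝[<] 1) (𝓝 N !) := by
  have hΓ : ContinuousAt Gamma ((N : ℝ) + 1) := by
    refine (differentiableAt_Gamma fun m ↦ ?_).continuousAt
    have : -(m : ℝ) < N + 1 := by
      linarith [(m.cast_nonneg : (0 : ℝ) ≤ m), (N.cast_nonneg : (0 : ℝ) ≤ N)]
    exact this.ne'
  have hf : ContinuousAt (fun s : ℝ ↦ (N : ℝ) / s + 1) 1 :=
    (continuousAt_const.div continuousAt_id one_ne_zero).add continuousAt_const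
  simpa [Function.comp_def, Gamma_nat_eq_factorial] using
    (hΓ.comp_of_eq hf (by simp)).tendsto.mono_left nhdsWithin_le_nhds

theorem stmt16_general (N : ℕ) (hN : 2 ≤ N)
    (ω : ℝ)
    (γ : ℝ → ℝ)
    (hγ : ∀ s ∈ Set.Ioo (0 : ℝ) 1, γ s =
      2 * ((N : ℝ) * ω) ^ 2 * Real.Gamma ((N : ℝ) / s + 1) / (N.factorial : ℝ)
        * ∑' k : ℕ, ((N + k - 1).factorial : ℝ) / (k.factorial : ℝ)
            * (1 / ((N : ℝ) + 2 * k) ^ ((N : ℝ) / s))) :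
    Tendsto (fun s : ℝ => (1 - s) * γ s)
      (nhdsWithin 1 (Set.Iio 1)) (nhds ((N : ℝ) * ω ^ 2 / 2 ^ (N - 1))) := by
  have hN0 : (0 : ℝ) < N := by positivity
  have hs : Tendsto (fun s : ℝ ↦ s / N) (𝓝[<] 1) (𝓝 (1 / N)) :=
    (tendsto_id.div_const _).mono_left nhdsWithin_le_nhds
  have hlim := (((tendsto_Gamma_const_div_add_one N).const_mul (2 * ((N : ℝ) * ω) ^ 2)).div_const
    (N ! : ℝ)).mul (hs.mul ((tendsto_sub_mul_tsum_factorial_div hN).comp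
      (tendsto_const_div_nhdsLT_one hN0)))
  have hval : 2 * ((N : ℝ) * ω) ^ 2 * N ! / N ! * (1 / N * (2 ^ N)⁻¹)
      = (N : ℝ) * ω ^ 2 / 2 ^ (N - 1) := by
    rw [← pow_sub_one_mul (by omega : N ≠ 0)]
    field_simp
  rw [← hval]
  refine hlim.congr' ?_
  filter_upwards [Ioo_mem_nhdsLT zero_lt_one] with s hs
  rw [hγ s hs, Function.comp_apply]
  have := hs.1.ne'
  field_simp

/-- With `ω_N = π^(N/2)/Γ(N/2+1)`, `p = N/s`, and
`γ_{s,N} = 2(Nω_N)² Γ(p+1)/N! · Σ_k (N+k-1)!/k! (N+2k)^(-p)`, one has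
`lim_{s→1⁻} (1-s) γ_{s,N} = N ω_N² / 2^(N-1)`. -/
theorem stmt16 (N : ℕ) (hN : 2 ≤ N)
    (ω : ℝ) (hω : ω = Real.pi ^ ((N : ℝ) / 2) / Real.Gamma ((N : ℝ) / 2 + 1))
    (γ : ℝ → ℝ)
    (hγ : ∀ s ∈ Set.Ioo (0 : ℝ) 1, γ s =
      2 * ((N : ℝ) * ω) ^ 2 * Real.Gamma ((N : ℝ) / s + 1) / (N.factorial : ℝ)
        * ∑' k : ℕ, ((N + k - 1).factorial : ℝ) / (k.factorial : ℝ)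
            * (1 / ((N : ℝ) + 2 * k) ^ ((N : ℝ) / s))) :
    Tendsto (fun s : ℝ => (1 - s) * γ s)
      (nhdsWithin 1 (Set.Iio 1)) (nhds ((N : ℝ) * ω ^ 2 / 2 ^ (N - 1))) :=
  stmt16_general N hN ω γ hγ
end
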